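/- arXiv:1306.6617 — 3 statements merged into one kernel-verified Lean document; each statement's English description precedes it below -/
import Mathlib

section
/- Let n : ℝ → ℂ \ {0} be a continuous 1-periodic function with winding number q + pm over one period (i.e., a continuous angle function ϑ with n(t) ∈ ℝ⁺e^{iϑ(t)} satisfies ϑ(t+1) = ϑ(t) + 2π(q+pm) for all t), where gcd(p,q) = 1, p ≥ 2, m ∈ ℤ. Suppose there exist k ∈ {1,…,p−1} and c > 0 such that n(t + k/p) = c·n(t) for all t ∈ ℝ. Then a contradiction arises; i.e., no such k, c exist. -/
/-!
A positive rescaling does not change the argument, so `ϑ (t + k/p) - ϑ t` lies in `2πℤ` for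
every `t`; being continuous, it is a constant `2πl`. Reaching `ϑ k` from `ϑ 0` by `p` shifts of
`k/p` and by `k` shifts of `1` gives `p l = k (q + p m)`, so `p ∣ k q`, hence `p ∣ k`, which is
impossible for `0 < k < p`.
-/

open Complex Real

theorem exists_int_eq_add_of_exp_mul_I_eq {a b : ℝ}
    (h : exp ((a : ℂ) * I) = exp ((b : ℂ) * I)) : ∃ l : ℤ, a = b + l * (2 * π) := by
  obtain ⟨l, hl⟩ := exp_eq_exp_iff_exists_int.mp h
  refine ⟨l, ?_⟩
  simpa using congrArg Complex.im hl

theorem exists_int_eq_add_of_eq_pos_mul {z w : ℂ} {a b c : ℝ} (hc : 0 < c) (hw : w ≠ 0)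
    (hz : z = ‖z‖ * exp ((a : ℂ) * I)) (hw' : w = ‖w‖ * exp ((b : ℂ) * I))
    (h : z = c * w) : ∃ l : ℤ, a = b + l * (2 * π) := by
  have hnorm : ‖z‖ = c * ‖w‖ := by rw [h, norm_mul, norm_real, norm_of_nonneg hc.le]
  have hz0 : (‖z‖ : ℂ) ≠ 0 := by
    rw [hnorm]
    exact_mod_cast mul_ne_zero hc.ne' (norm_ne_zero_iff.mpr hw)
  apply exists_int_eq_add_of_exp_mul_I_eq
  apply mul_left_cancel₀ hz0
  rw [← hz, hnorm, h]
  push_cast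
  linear_combination (c : ℂ) * hw'

theorem exists_int_forall_eq_of_continuous {X : Type*} [TopologicalSpace X]
    [PreconnectedSpace X] [Nonempty X] {f : X → ℝ} (hf : Continuous f) {r : ℝ} (hr : r ≠ 0)
    (h : ∀ x, ∃ l : ℤ, f x = l * r) : ∃ l : ℤ, ∀ x, f x = l * r := by
  choose L hL using h
  have hL_cont : Continuous L := by
    rw [Int.isClosedEmbedding_coe_real.isEmbedding.continuous_iff]
    convert hf.div_const r using 1
    ext x
    simp [hL x, hr]
  obtain ⟨x₀⟩ := ‹Nonempty X›
  exact ⟨L x₀, fun x => by rw [hL x, PreconnectedSpace.constant ‹_› hL_cont]⟩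

theorem eq_add_nsmul_of_forall_add_eq {G H : Type*} [AddMonoid G] [AddMonoid H] {f : G → H}
    {s : G} {d : H} (h : ∀ t, f (t + s) = f t + d) (t : G) (j : ℕ) :
    f (t + j • s) = f t + j • d := by
  induction j with
  | zero => simp
  | succ j ih => rw [succ_nsmul, ← add_assoc, h, ih, succ_nsmul, add_assoc]

theorem exists_int_forall_lift_add_eq {n : ℝ → ℂ} {ϑ : ℝ → ℝ} (hnz : ∀ t, n t ≠ 0)
    (hϑ : Continuous ϑ) (hangle : ∀ t, n t = ‖n t‖ * exp ((ϑ t : ℂ) * I))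
    {s c : ℝ} (hc : 0 < c) (hsym : ∀ t, n (t + s) = c * n t) :
    ∃ l : ℤ, ∀ t, ϑ (t + s) = ϑ t + l * (2 * π) := by
  have hshift : ∀ t, ∃ l : ℤ, ϑ (t + s) - ϑ t = l * (2 * π) := fun t => by
    obtain ⟨l, hl⟩ :=
      exists_int_eq_add_of_eq_pos_mul hc (hnz t) (hangle _) (hangle t) (hsym t)
    exact ⟨l, by rw [hl]; ring⟩
  obtain ⟨l, hl⟩ := exists_int_forall_eq_of_continuous (by fun_prop) two_pi_pos.ne' hshift
  exact ⟨l, fun t => by rw [← hl t]; ring⟩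

theorem no_scaled_shift_symmetry_general (p : ℕ) (q m : ℤ)
    (hgcd : Int.gcd q (p : ℤ) = 1)
    (n : ℝ → ℂ) (hnz : ∀ t, n t ≠ 0)
    (ϑ : ℝ → ℝ) (hϑ : Continuous ϑ)
    (hangle : ∀ t, n t = (‖n t‖ : ℂ) * Complex.exp ((ϑ t : ℂ) * Complex.I))
    (hϑper : ∀ t, ϑ (t + 1) = ϑ t + 2 * π * ((q : ℝ) + (p : ℝ) * (m : ℝ)))
    (k : ℕ) (hk1 : 1 ≤ k) (hk2 : k ≤ p - 1) (c : ℝ) (hc : 0 < c)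
    (hsym : ∀ t : ℝ, n (t + (k : ℝ) / (p : ℝ)) = (c : ℂ) * n t) :
    False := by
  obtain ⟨l, hl⟩ := exists_int_forall_lift_add_eq hnz hϑ hangle hc hsym
  have hp : (p : ℝ) ≠ 0 := by exact_mod_cast (by omega : p ≠ 0)
  have hshifts := eq_add_nsmul_of_forall_add_eq hl 0 p
  have hperiods := eq_add_nsmul_of_forall_add_eq hϑper 0 k
  simp only [nsmul_eq_mul, mul_one] at hshifts hperiods
  rw [mul_div_cancel₀ _ hp, hperiods] at hshifts
  have hwinding : (p : ℤ) * l = k * (q + p * m) := by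
    have : ((p * l : ℤ) : ℝ) = ((k * (q + p * m) : ℤ) : ℝ) := by
      push_cast
      nlinarith [pi_pos]
    exact_mod_cast this
  have hdvd : (p : ℤ) ∣ k := by
    have hkq : (p : ℤ) ∣ k * q := ⟨l - k * m, by linear_combination -hwinding⟩
    exact Int.dvd_of_dvd_mul_left_of_gcd_one hkq (by rwa [Int.gcd_comm])
  have := Int.le_of_dvd (by omega) hdvd
  omega

/-- Let `n : ℝ → ℂ ∖ {0}` be a continuous 1-periodic map with winding number
`q + p·m` over one period (witnessed by a continuous angle lift `ϑ`), where
`gcd(q,p) = 1` and `p ≥ 2`.  If there are `k ∈ {1,…,p−1}` and `c > 0` with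
`n(t + k/p) = c·n(t)` for all `t`, then we reach a contradiction. -/
theorem no_scaled_shift_symmetry (p : ℕ) (q m : ℤ) (hp : 2 ≤ p)
    (hgcd : Int.gcd q (p : ℤ) = 1)
    (n : ℝ → ℂ) (hn : Continuous n) (hnz : ∀ t, n t ≠ 0)
    (hnper : ∀ t, n (t + 1) = n t)
    (ϑ : ℝ → ℝ) (hϑ : Continuous ϑ)
    (hangle : ∀ t, n t = (‖n t‖ : ℂ) * Complex.exp ((ϑ t : ℂ) * Complex.I))
    (hϑper : ∀ t, ϑ (t + 1) = ϑ t + 2 * π * ((q : ℝ) + (p : ℝ) * (m : ℝ)))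
    (k : ℕ) (hk1 : 1 ≤ k) (hk2 : k ≤ p - 1) (c : ℝ) (hc : 0 < c)
    (hsym : ∀ t : ℝ, n (t + (k : ℝ) / (p : ℝ)) = (c : ℂ) * n t) :
    False :=
  no_scaled_shift_symmetry_general p q m hgcd n hnz ϑ hϑ hangle hϑper k hk1 hk2 c hc hsym
end

section
/- Let f : D_r → ℂ be holomorphic with a zero of even order k₀ ≥ 2 at 0, real on the real axis, nonnegative on (−r,r), and nonvanishing on D_r \ {0}. Then for all sufficiently small ρ > 0, the Brouwer degree of f on the full disk D_r at the value −ρ equals k₀, and the degree of f restricted to the upper half-disk D_r⁺ at −ρ equals k₀/2 ≥ 1. -/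
/-!
Near `0` write `f = φ ^ k₀` with `φ z = z · g(z)^(1/k₀)` a local biholomorphism. On the rest of
the disk `|f|` is bounded below, so for small `c ≠ 0` the solutions of `f = c` in the disk are the
`φ`-preimages of the `k₀` roots of `w ^ k₀ = c`. For `c = -ρ` none of them is real, since `f ≥ 0`
on the real diameter, and by Schwarz reflection `f (conj z) = conj (f z)` conjugation permutes
them, so exactly half lie in the upper half-disk.
-/

open Complex ComplexConjugate Filter Metric Set Topology

theorem AnalyticAt.conj_conj {f : ℂ → ℂ} {z : ℂ} (hf : AnalyticAt ℂ f z) :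
    AnalyticAt ℂ (conj ∘ f ∘ conj) (conj z) := by
  rw [Complex.analyticAt_iff_eventually_differentiableAt] at hf ⊢
  have hconj : Tendsto conj (𝓝 (conj z)) (𝓝 z) := by
    simpa using Complex.continuous_conj.tendsto (conj z)
  filter_upwards [hconj.eventually hf] with w hw
  exact differentiableAt_conj_conj_iff.2 hw

theorem AnalyticAt.exists_eventually_pow_eq {E : Type*} [NormedAddCommGroup E] [NormedSpace ℂ E]
    {g : E → ℂ} {z₀ : E} (hg : AnalyticAt ℂ g z₀) (hg₀ : g z₀ ≠ 0) {k : ℕ} (hk : k ≠ 0) :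
    ∃ h : E → ℂ, AnalyticAt ℂ h z₀ ∧ h z₀ ≠ 0 ∧ ∀ᶠ z in 𝓝 z₀, h z ^ k = g z := by
  obtain ⟨a, ha⟩ := IsAlgClosed.exists_pow_nat_eq (g z₀) (Nat.pos_of_ne_zero hk)
  have ha₀ : a ≠ 0 := by rintro rfl; exact hg₀ (by simpa [hk] using ha.symm)
  have hlog : AnalyticAt ℂ (fun z => Complex.log (g z / g z₀)) z₀ :=
    (hg.div analyticAt_const hg₀).clog (by simp [hg₀])
  -- dividing by `g z₀` keeps the logarithm near `1`, on its principal branch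
  refine ⟨fun z => a * Complex.exp (Complex.log (g z / g z₀) / k),
    analyticAt_const.mul (hlog.div analyticAt_const (by exact_mod_cast hk)).cexp,
    mul_ne_zero ha₀ (exp_ne_zero _), ?_⟩
  filter_upwards [hg.continuousAt.eventually_ne hg₀] with z hz
  rw [mul_pow, ← exp_nat_mul, mul_div_cancel₀ _ (Nat.cast_ne_zero.2 hk),
    exp_log (div_ne_zero hz hg₀), ha, mul_div_cancel₀ _ hg₀]

theorem exists_openPartialHomeomorph_eventually_eq_pow {f g : ℂ → ℂ} {z₀ : ℂ} {k : ℕ}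
    (hk : k ≠ 0) (hg : AnalyticAt ℂ g z₀) (hg₀ : g z₀ ≠ 0)
    (hfg : ∀ᶠ z in 𝓝 z₀, f z = (z - z₀) ^ k * g z) :
    ∃ e : OpenPartialHomeomorph ℂ ℂ, z₀ ∈ e.source ∧ e z₀ = 0 ∧ ∀ᶠ z in 𝓝 z₀, f z = e z ^ k := by
  obtain ⟨h, hh, hh₀, hhk⟩ := hg.exists_eventually_pow_eq hg₀ hk
  have hstrict : HasStrictDerivAt (fun z => (z - z₀) * h z) (h z₀) z₀ := by
    simpa using HasStrictDerivAt.fun_mul ((hasStrictDerivAt_id z₀).sub_const z₀) hh.hasStrictDerivAt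
  have hequiv := hstrict.hasStrictFDerivAt_equiv hh₀
  refine ⟨hequiv.toOpenPartialHomeomorph _, hequiv.mem_toOpenPartialHomeomorph_source, ?_, ?_⟩
  · simp [hequiv.toOpenPartialHomeomorph_coe]
  · filter_upwards [hfg, hhk] with z hfz hhz
    rw [hequiv.toOpenPartialHomeomorph_coe, hfz, ← hhz, mul_pow]

theorem Complex.ncard_setOf_pow_eq {k : ℕ} (hk : k ≠ 0) {c : ℂ} (hc : c ≠ 0) :
    {w : ℂ | w ^ k = c}.ncard = k := by
  classical
  have hζ := Complex.isPrimitiveRoot_exp k hk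
  have hroots : {w : ℂ | w ^ k = c} = (Polynomial.nthRoots k c).toFinset := by
    ext w
    simp [Polynomial.mem_nthRoots (Nat.pos_of_ne_zero hk)]
  rw [hroots, ncard_coe_finset, Multiset.toFinset_card_of_nodup (hζ.nthRoots_nodup hc),
    hζ.card_nthRoots, if_pos (IsAlgClosed.exists_pow_nat_eq c (Nat.pos_of_ne_zero hk))]

theorem eventually_setOf_pow_eq_subset {𝕜 : Type*} [NormedField 𝕜] {V : Set 𝕜} (hV : V ∈ 𝓝 0)
    (k : ℕ) : ∀ᶠ c in 𝓝 0, {w : 𝕜 | w ^ k = c} ⊆ V := by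
  obtain ⟨τ, hτ, hτV⟩ := Metric.mem_nhds_iff.1 hV
  filter_upwards [ball_mem_nhds (0 : 𝕜) (pow_pos hτ k)] with c hc w hw
  apply hτV
  rw [mem_ball_zero_iff] at hc ⊢
  rw [← hw, norm_pow] at hc
  exact lt_of_pow_lt_pow_left₀ k hτ.le hc

theorem IsCompact.eventually_forall_ne {X Y : Type*} [TopologicalSpace X] [TopologicalSpace Y]
    [T2Space Y] {K : Set X} {f : X → Y} {a : Y} (hK : IsCompact K) (hf : ContinuousOn f K)
    (ha : ∀ z ∈ K, f z ≠ a) : ∀ᶠ c in 𝓝 a, ∀ z ∈ K, f z ≠ c := by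
  have : (f '' K)ᶜ ∈ 𝓝 a :=
    (hK.image_of_continuousOn hf).isClosed.isOpen_compl.mem_nhds
      (by rintro ⟨z, hz, hza⟩; exact ha z hz hza)
  filter_upwards [this] with c hc z hz hzc
  exact hc ⟨z, hz, hzc⟩

theorem OpenPartialHomeomorph.eventually_ncard_pow_eq {X : Type*} [TopologicalSpace X]
    {e : OpenPartialHomeomorph X ℂ} {x : X} (hx : x ∈ e.source) (he : e x = 0) {U : Set X}
    (hU : U ∈ 𝓝 x) (hUe : U ⊆ e.source) {k : ℕ} (hk : k ≠ 0) :
    ∀ᶠ c in 𝓝[≠] 0, {z ∈ U | e z ^ k = c}.ncard = k := by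
  have h0 : (0 : ℂ) ∈ e.target := he ▸ e.map_source hx
  have hV : e.target ∩ e.symm ⁻¹' U ∈ 𝓝 0 :=
    inter_mem (e.open_target.mem_nhds h0)
      (e.continuousAt_symm h0 (by rwa [← he, e.left_inv hx]))
  filter_upwards [nhdsWithin_le_nhds (eventually_setOf_pow_eq_subset hV k),
    self_mem_nhdsWithin] with c hcV hc
  have himage : {z ∈ U | e z ^ k = c} = e.symm '' {w | w ^ k = c} := by
    ext z
    constructor
    · rintro ⟨hzU, hz⟩
      exact ⟨e z, hz, e.left_inv (hUe hzU)⟩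
    · rintro ⟨w, hw, rfl⟩
      obtain ⟨hwt, hwU⟩ := hcV hw
      exact ⟨hwU, by rwa [e.right_inv hwt]⟩
  rw [himage, (e.symm.injOn.mono fun w hw => (hcV hw).1).ncard_image,
    Complex.ncard_setOf_pow_eq hk hc]

theorem IsCompact.eventually_ncard_eq_of_eventually_eq_pow {X : Type*} [TopologicalSpace X]
    {f : X → ℂ} {K : Set X} {x : X} (hK : IsCompact K) (hKx : K ∈ 𝓝 x) (hf : ContinuousOn f K)
    (hnv : ∀ z ∈ K, z ≠ x → f z ≠ 0) {e : OpenPartialHomeomorph X ℂ} (hx : x ∈ e.source)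
    (he : e x = 0) {k : ℕ} (hk : k ≠ 0) (hfe : ∀ᶠ z in 𝓝 x, f z = e z ^ k) :
    ∀ᶠ c in 𝓝[≠] 0, {z ∈ K | f z = c}.ncard = k := by
  set U := interior (K ∩ e.source ∩ {z | f z = e z ^ k})
  have hU : U ∈ 𝓝 x :=
    interior_mem_nhds.2 (inter_mem (inter_mem hKx (e.open_source.mem_nhds hx)) hfe)
  have hUK : U ⊆ K ∩ e.source ∩ {z | f z = e z ^ k} := interior_subset
  have hfar : ∀ z ∈ K \ U, f z ≠ 0 := fun z hz =>
    hnv z hz.1 fun hzx => hz.2 (hzx ▸ mem_of_mem_nhds hU)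
  filter_upwards [e.eventually_ncard_pow_eq hx he hU (fun z hz => (hUK hz).1.2) hk,
    nhdsWithin_le_nhds ((hK.diff isOpen_interior).eventually_forall_ne
      (hf.mono sdiff_subset) hfar)] with c hcount hnear
  convert hcount using 2
  ext z
  constructor
  · rintro ⟨hzK, hz⟩
    have hzU : z ∈ U := by_contra fun hzU => hnear z ⟨hzK, hzU⟩ hz
    exact ⟨hzU, (hUK hzU).2 ▸ hz⟩
  · rintro ⟨hzU, hz⟩
    exact ⟨(hUK hzU).1.1, (hUK hzU).2.trans hz⟩

theorem AnalyticOnNhd.apply_conj_eq_conj_apply {f : ℂ → ℂ} {r : ℝ} (hr : 0 < r)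
    (hf : AnalyticOnNhd ℂ f (closedBall 0 r)) (hreal : ∀ s : ℝ, |s| ≤ r → (f s).im = 0) :
    ∀ z ∈ closedBall (0 : ℂ) r, f (conj z) = conj (f z) := by
  have hF : AnalyticOnNhd ℂ (conj ∘ f ∘ conj) (closedBall 0 r) := fun z hz => by
    simpa using (hf (conj z) (by simpa using hz)).conj_conj
  have hfreq : ∃ᶠ z in 𝓝[≠] (0 : ℂ), (conj ∘ f ∘ conj) z = f z := by
    have hofReal : Tendsto ((↑) : ℝ → ℂ) (𝓝[≠] 0) (𝓝[≠] 0) := by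
      simpa using continuous_ofReal.continuousWithinAt.tendsto_nhdsWithin
        (x := (0 : ℝ)) (t := {0}ᶜ) fun _ _ ↦ by simp_all
    refine hofReal.frequently (Eventually.frequently ?_)
    filter_upwards [nhdsWithin_le_nhds (Icc_mem_nhds (neg_lt_zero.2 hr) hr)] with s hs
    simp [conj_eq_iff_im.2 (hreal s (abs_le.2 hs))]
  intro z hz
  have := hF.eqOn_of_preconnected_of_frequently_eq hf (convex_closedBall 0 r).isPreconnected
    (mem_closedBall_self hr.le) hfreq hz
  simpa using congrArg conj this

theorem Set.ncard_eq_two_mul_ncard_setOf_im_nonneg {S : Set ℂ} (hconj : ∀ z ∈ S, conj z ∈ S)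
    (hreal : ∀ z ∈ S, z.im ≠ 0) : S.ncard = 2 * {z ∈ S | 0 ≤ z.im}.ncard := by
  set A := {z ∈ S | 0 ≤ z.im}
  have hunion : S = A ∪ conj '' A := by
    refine Subset.antisymm (fun z hz => ?_) (union_subset (sep_subset _ _) ?_)
    · rcases le_or_gt 0 z.im with him | him
      · exact Or.inl ⟨hz, him⟩
      · exact Or.inr ⟨conj z, ⟨hconj z hz, by simp [him.le]⟩, conj_conj z⟩
    · rintro _ ⟨z, ⟨hz, -⟩, rfl⟩
      exact hconj z hz
  have hdisj : Disjoint A (conj '' A) := by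
    refine disjoint_left.2 fun z ⟨hzS, hz⟩ ⟨w, ⟨_, hw⟩, hwz⟩ => hreal z hzS ?_
    have : z.im = -w.im := by simp [← hwz]
    linarith
  rw [ncard_def, ncard_def, hunion, encard_union_eq hdisj,
    (starRingEnd ℂ).injective.encard_image, ← two_mul, ENat.toNat_mul]
  rfl

theorem im_ne_zero_of_re_apply_neg {f : ℂ → ℂ} {r : ℝ}
    (hnonneg : ∀ s : ℝ, |s| < r → 0 ≤ (f s).re) {z : ℂ} (hz : ‖z‖ < r) (hfz : (f z).re < 0) :
    z.im ≠ 0 := by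
  intro him
  have hz_real : ((z.re : ℝ) : ℂ) = z := Complex.ext rfl (by simp [him])
  have := hnonneg z.re ((abs_re_le_norm z).trans_lt hz)
  rw [hz_real] at this
  linarith

theorem tendsto_ofReal_neg_nhdsGT : Tendsto (fun ρ : ℝ => ((-ρ : ℝ) : ℂ)) (𝓝[>] 0) (𝓝[≠] 0) := by
  refine tendsto_nhdsWithin_iff.2 ⟨?_, ?_⟩
  · exact ((continuous_ofReal.comp continuous_neg).tendsto' 0 0 (by simp)).mono_left
      nhdsWithin_le_nhds
  · filter_upwards [self_mem_nhdsWithin] with ρ (hρ : 0 < ρ)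
    simp [hρ.ne']

theorem degree_even_order_zero_half_disk_general
    (f : ℂ → ℂ) (r : ℝ) (hr : 0 < r) (k₀ : ℕ)
    (hf : AnalyticOnNhd ℂ f (Metric.closedBall 0 r))
    (hk₀2 : 2 ≤ k₀)
    (hord : ∃ g : ℂ → ℂ, AnalyticAt ℂ g 0 ∧ g 0 ≠ 0 ∧
      ∀ᶠ z in nhds (0 : ℂ), f z = z ^ k₀ * g z)
    (hreal : ∀ s : ℝ, |s| ≤ r → (f (s : ℂ)).im = 0)
    (hnonneg : ∀ s : ℝ, |s| < r → 0 ≤ (f (s : ℂ)).re)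
    (hnv : ∀ z ∈ Metric.closedBall (0 : ℂ) r, z ≠ 0 → f z ≠ 0) :
    ∃ ρ₀ > (0 : ℝ), ∀ ρ : ℝ, 0 < ρ → ρ < ρ₀ →
      Nat.card {z : ℂ // z ∈ Metric.closedBall (0 : ℂ) r ∧ f z = (-ρ : ℝ)} = k₀ ∧
      Nat.card {z : ℂ // z ∈ Metric.closedBall (0 : ℂ) r ∧ 0 ≤ z.im ∧ f z = (-ρ : ℝ)} = k₀ / 2 ∧
      1 ≤ k₀ / 2 := by
  have hk₀ : k₀ ≠ 0 := by omega
  obtain ⟨g, hg, hg₀, hfg⟩ := hord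
  obtain ⟨e, he₀, he, hfe⟩ :=
    exists_openPartialHomeomorph_eventually_eq_pow hk₀ hg hg₀ (by simpa using hfg)
  have hcount := (isCompact_closedBall (0 : ℂ) r).eventually_ncard_eq_of_eventually_eq_pow
    (closedBall_mem_nhds 0 hr) hf.continuousOn hnv he₀ he hk₀ hfe
  have hsphere := (isCompact_sphere (0 : ℂ) r).eventually_forall_ne
    (hf.continuousOn.mono sphere_subset_closedBall)
    fun z hz => hnv z (sphere_subset_closedBall hz) (ne_of_mem_sphere hz hr.ne')
  obtain ⟨ρ₀, hρ₀, hsmall⟩ := (nhdsGT_basis 0).eventually_iff.1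
    (tendsto_ofReal_neg_nhdsGT.eventually (hcount.and (nhdsWithin_le_nhds hsphere)))
  refine ⟨ρ₀, hρ₀, fun ρ hρ hρρ₀ => ?_⟩
  obtain ⟨hS, hSr⟩ := hsmall ⟨hρ, hρρ₀⟩
  have hsymm := hf.apply_conj_eq_conj_apply hr hreal
  have hhalf := Set.ncard_eq_two_mul_ncard_setOf_im_nonneg
    (S := {z ∈ closedBall (0 : ℂ) r | f z = (-ρ : ℝ)})
    (fun z ⟨hz, hfz⟩ => ⟨by simpa using hz, by rw [hsymm z hz, hfz, conj_ofReal]⟩)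
    fun z ⟨hz, hfz⟩ => im_ne_zero_of_re_apply_neg hnonneg
      ((mem_closedBall_zero_iff.1 hz).lt_of_ne fun h => hSr z (mem_sphere_zero_iff_norm.2 h) hfz)
      (by simpa [hfz] using hρ)
  have hupper : Nat.card {z : ℂ // z ∈ closedBall (0 : ℂ) r ∧ 0 ≤ z.im ∧ f z = (-ρ : ℝ)} =
      {z ∈ {z ∈ closedBall (0 : ℂ) r | f z = (-ρ : ℝ)} | 0 ≤ z.im}.ncard := by
    rw [← Nat.card_coe_set_eq]
    exact Nat.card_congr (Equiv.subtypeEquivRight fun z => by simp only [mem_ofPred_eq]; tauto)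
  refine ⟨(Nat.card_coe_set_eq _).trans hS, by omega, by omega⟩

/-- Degree count for a holomorphic map near an even-order zero (the Brouwer
degree computation of the paper, expressed as a solution count): if `f` is
holomorphic near the closed disk `D_r`, has a zero of even order `k₀ ≥ 2` at
`0`, is real on the real axis, nonnegative on `(−r,r)`, and nonvanishing on
`D_r ∖ {0}`, then for all sufficiently small `ρ > 0`, the equation `f = −ρ`
has exactly `k₀` solutions in `D_r` (the degree of `f` at `−ρ` on `D_r`) and
exactly `k₀/2 ≥ 1` solutions in the closed upper half-disk `D_r⁺`. -/
theorem degree_even_order_zero_half_disk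
    (f : ℂ → ℂ) (r : ℝ) (hr : 0 < r) (k₀ : ℕ)
    (hf : AnalyticOnNhd ℂ f (Metric.closedBall 0 r))
    (hk₀even : Even k₀) (hk₀2 : 2 ≤ k₀)
    (hord : ∃ g : ℂ → ℂ, AnalyticAt ℂ g 0 ∧ g 0 ≠ 0 ∧
      ∀ᶠ z in nhds (0 : ℂ), f z = z ^ k₀ * g z)
    (hreal : ∀ s : ℝ, |s| ≤ r → (f (s : ℂ)).im = 0)
    (hnonneg : ∀ s : ℝ, |s| < r → 0 ≤ (f (s : ℂ)).re)
    (hnv : ∀ z ∈ Metric.closedBall (0 : ℂ) r, z ≠ 0 → f z ≠ 0) :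
    ∃ ρ₀ > (0 : ℝ), ∀ ρ : ℝ, 0 < ρ → ρ < ρ₀ →
      Nat.card {z : ℂ // z ∈ Metric.closedBall (0 : ℂ) r ∧ f z = (-ρ : ℝ)} = k₀ ∧
      Nat.card {z : ℂ // z ∈ Metric.closedBall (0 : ℂ) r ∧ 0 ≤ z.im ∧ f z = (-ρ : ℝ)} = k₀ / 2 ∧
      1 ≤ k₀ / 2 :=
  degree_even_order_zero_half_disk_general f r hr k₀ hf hk₀2 hord hreal hnonneg hnv
end

section
/- Let φ : ℝ → Sp(2,ℝ) be a smooth path satisfying φ(t+1) = φ(t)φ(1) for all t and φ(0) = I. For a nonzero vector ζ ∈ ℂ \ {0}, let Δ_φ(ζ) = (θ(1) − θ(0))/(2π) where θ is a continuous angle function with φ(t)ζ ∈ ℝ⁺e^{iθ(t)}. Then the image I_φ = Δ_φ(ℂ \ {0}) is a closed interval of length strictly less than 1/2. -/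
set_option maxHeartbeats 1000000

open Real

/-- The action of a real `2×2` matrix on `ℂ ≅ ℝ²`. -/
def actM (A : Matrix (Fin 2) (Fin 2) ℝ) (ζ : ℂ) : ℂ :=
  ⟨A 0 0 * ζ.re + A 0 1 * ζ.im, A 1 0 * ζ.re + A 1 1 * ζ.im⟩

/- ### Auxiliary lemmas -/

lemma aux_exists_shift (c m M p : ℝ) (hp : 0 < p) (h : m + p ≤ M) :
    ∃ k : ℤ, c + k * p ∈ Set.Icc m M := by
  refine ⟨⌈(m - c) / p⌉, ?_, ?_⟩
  · have h1 : (m - c) / p ≤ (⌈(m - c) / p⌉ : ℝ) := Int.le_ceil _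
    rw [div_le_iff₀ hp] at h1
    linarith
  · have h1 : ((⌈(m - c) / p⌉ : ℝ)) < (m - c) / p + 1 := Int.ceil_lt_add_one _
    have h2 : (⌈(m - c) / p⌉ : ℝ) * p < ((m - c) / p + 1) * p := by
      exact mul_lt_mul_of_pos_right h1 hp
    rw [add_mul, div_mul_cancel₀ _ hp.ne'] at h2
    linarith

lemma aux_ivt_avoid (δ : ℝ → ℝ) (hc : ContinuousOn δ (Set.Icc 0 1))
    (c p : ℝ) (hp : 0 < p)
    (havoid : ∀ t ∈ Set.Icc (0:ℝ) 1, ∀ k : ℤ, δ t ≠ c + k * p) :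
    |δ 1 - δ 0| < p := by
  by_contra hle
  push_neg at hle
  have h01 : Set.uIcc (0:ℝ) 1 = Set.Icc 0 1 := Set.uIcc_of_le zero_le_one
  have hsub : Set.uIcc (δ 0) (δ 1) ⊆ δ '' Set.Icc 0 1 := by
    rw [← h01]
    exact intermediate_value_uIcc (h01 ▸ hc)
  have hminmax : min (δ 0) (δ 1) + p ≤ max (δ 0) (δ 1) := by
    have h2 := max_sub_min_eq_abs (δ 0) (δ 1)
    linarith
  obtain ⟨k, hk⟩ := aux_exists_shift c (min (δ 0) (δ 1)) (max (δ 0) (δ 1)) p hp hminmax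
  have hmem : c + k * p ∈ Set.uIcc (δ 0) (δ 1) := by
    rw [Set.mem_uIcc]
    rcases le_total (δ 0) (δ 1) with h | h
    · left
      constructor
      · have := hk.1; rw [min_eq_left h] at this; exact this
      · have := hk.2; rw [max_eq_right h] at this; exact this
    · right
      constructor
      · have := hk.1; rw [min_eq_right h] at this; exact this
      · have := hk.2; rw [max_eq_left h] at this; exact this
  obtain ⟨t, ht, hteq⟩ := hsub hmem
  exact havoid t ht k hteq

lemma aux_lift_unique (θ ψ : ℝ → ℝ) (hθ : Continuous θ) (hψ : Continuous ψ)
    (h : ∀ t, Complex.exp ((θ t : ℂ) * Complex.I) = Complex.exp ((ψ t : ℂ) * Complex.I)) :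
    θ 1 - θ 0 = ψ 1 - ψ 0 := by
  set δ : ℝ → ℝ := fun t => θ t - ψ t with hδ
  have hcos : ∀ t, Real.cos (δ t) = 1 := by
    intro t
    have h1 : Complex.exp ((δ t : ℂ) * Complex.I) = 1 := by
      have h2 : ((δ t : ℂ)) = (θ t : ℂ) - (ψ t : ℂ) := by push_cast [hδ]; ring
      rw [h2, sub_mul, Complex.exp_sub, h t, div_self (Complex.exp_ne_zero _)]
    have h3 := congrArg Complex.re h1
    rwa [Complex.exp_ofReal_mul_I_re, Complex.one_re] at h3
  have hav : |δ 1 - δ 0| < 2 * π := by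
    apply aux_ivt_avoid δ (hθ.sub hψ).continuousOn π (2 * π) (by positivity)
    intro t ht k heq
    have h1 := hcos t
    rw [heq] at h1
    have h2 : Real.cos (π + (k : ℝ) * (2 * π)) = Real.cos π :=
      Real.cos_add_int_mul_two_pi π k
    rw [Real.cos_pi] at h2
    rw [h2] at h1
    linarith
  obtain ⟨n1, hn1⟩ := (Real.cos_eq_one_iff _).mp (hcos 1)
  obtain ⟨n0, hn0⟩ := (Real.cos_eq_one_iff _).mp (hcos 0)
  have heq : δ 1 = δ 0 := by
    rw [← hn1, ← hn0] at hav ⊢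
    have h1 : |((n1 : ℝ) - n0)| * (2 * π) < 2 * π := by
      calc |((n1 : ℝ) - n0)| * (2 * π) = |((n1 : ℝ) - n0) * (2 * π)| := by
            rw [abs_mul, abs_of_pos (by positivity : (0:ℝ) < 2 * π)]
        _ = |(n1 : ℝ) * (2 * π) - (n0 : ℝ) * (2 * π)| := by ring_nf
        _ < 2 * π := hav
    have h2 : |((n1 : ℝ) - n0)| < 1 := by
      have hπ : (0:ℝ) < 2 * π := by positivity
      nlinarith [abs_nonneg ((n1 : ℝ) - n0)]
    have h3 : |n1 - n0| < 1 := by exact_mod_cast (by push_cast; exact h2 : |((n1 - n0 : ℤ) : ℝ)| < 1)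
    have h4 := abs_lt.mp h3
    have : n1 = n0 := by omega
    rw [this]
  have : θ 1 - ψ 1 = θ 0 - ψ 0 := heq
  linarith

lemma aux_exp_eq {F : ℂ} {θ : ℝ} (hF : F ≠ 0)
    (h : F = (‖F‖ : ℂ) * Complex.exp ((θ : ℂ) * Complex.I)) :
    Complex.exp ((θ : ℂ) * Complex.I) = F / (‖F‖ : ℂ) := by
  have habs : (‖F‖ : ℂ) ≠ 0 := by
    simpa using hF
  rw [eq_div_iff habs, mul_comm]
  exact h.symm

lemma aux_lift_re_im {F : ℂ} {θ : ℝ}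
    (h : F = (‖F‖ : ℂ) * Complex.exp ((θ : ℂ) * Complex.I)) :
    F.re = ‖F‖ * Real.cos θ ∧ F.im = ‖F‖ * Real.sin θ := by
  constructor
  · conv_lhs => rw [h]
    simp [Complex.mul_re, Complex.exp_ofReal_mul_I_re, Complex.exp_ofReal_mul_I_im]
  · conv_lhs => rw [h]
    simp [Complex.mul_im, Complex.exp_ofReal_mul_I_re, Complex.exp_ofReal_mul_I_im]

lemma aux_dep {z w : ℂ} (hw : w ≠ 0) (h : z.re * w.im - z.im * w.re = 0) :
    ∃ c : ℝ, z = (c : ℂ) * w := by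
  have hn : w.re ^ 2 + w.im ^ 2 ≠ 0 := by
    intro h0
    apply hw
    apply Complex.ext <;> [skip; skip] <;>
      · simp only [Complex.zero_re, Complex.zero_im]
        nlinarith [sq_nonneg w.re, sq_nonneg w.im]
  refine ⟨(z.re * w.re + z.im * w.im) / (w.re ^ 2 + w.im ^ 2), ?_⟩
  apply Complex.ext
  · simp only [Complex.mul_re, Complex.ofReal_re, Complex.ofReal_im, zero_mul, sub_zero]
    field_simp
    linear_combination w.im * h
  · simp only [Complex.mul_im, Complex.ofReal_re, Complex.ofReal_im, zero_mul, add_zero]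
    field_simp
    linear_combination (-w.re) * h

lemma aux_contAt (F : ℝ → ℂ → ℂ)
    (hFc : Continuous fun p : ℝ × ℂ => F p.1 p.2)
    (hFne : ∀ t ζ, ζ ≠ 0 → F t ζ ≠ 0)
    (Δ : ℂ → ℝ)
    (hΔ : ∀ ζ : ℂ, ζ ≠ 0 → ∃ θ : ℝ → ℝ, Continuous θ ∧
      (∀ t, F t ζ = (‖F t ζ‖ : ℂ) * Complex.exp ((θ t : ℂ) * Complex.I)) ∧
      Δ ζ = (θ 1 - θ 0) / (2 * π))
    (ζ0 : ℂ) (hζ0 : ζ0 ≠ 0) : ContinuousAt Δ ζ0 := by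
  rw [Metric.continuousAt_iff]
  intro ε0 hε0
  have hπ : (0:ℝ) < π := pi_pos
  set m : ℝ := min (π * ε0 / 2) (π / 4) with hm
  have hm0 : 0 < m := lt_min (by positivity) (by positivity)
  have hmlt : m < π / 2 := lt_of_le_of_lt (min_le_right _ _) (by linarith)
  set ε : ℝ := Real.sin m with hε
  have hε0' : 0 < ε := Real.sin_pos_of_pos_of_lt_pi hm0 (by linarith)
  have hε1 : ε ≤ 1 := Real.sin_le_one m
  have habs0 : 0 < ‖ζ0‖ := norm_pos_iff.mpr hζ0
  set r : ℝ := ‖ζ0‖ / 2 with hr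
  have hr0 : 0 < r := by positivity
  set K : Set (ℝ × ℂ) := Set.Icc (0:ℝ) 1 ×ˢ Metric.closedBall ζ0 r with hK
  have hKc : IsCompact K := isCompact_Icc.prod (isCompact_closedBall _ _)
  have hball_ne : ∀ ζ ∈ Metric.closedBall ζ0 r, ζ ≠ (0:ℂ) := by
    intro ζ hζ h0
    rw [Metric.mem_closedBall, h0, Complex.dist_eq, zero_sub, norm_neg] at hζ
    rw [hr] at hζ
    linarith
  set u : ℝ × ℂ → ℂ := fun p => F p.1 p.2 / ((‖F p.1 p.2‖ : ℝ) : ℂ) with hu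
  have hucont : ContinuousOn u K := by
    apply ContinuousOn.div hFc.continuousOn
    · exact (Complex.continuous_ofReal.comp (continuous_norm.comp hFc)).continuousOn
    · intro p hp
      have hne : F p.1 p.2 ≠ 0 := hFne _ _ (hball_ne p.2 hp.2)
      simpa using hne
  have huc := hKc.uniformContinuousOn_of_continuous hucont
  rw [Metric.uniformContinuousOn_iff] at huc
  obtain ⟨d, hd0, hd⟩ := huc ε hε0'
  refine ⟨min d r, lt_min hd0 hr0, ?_⟩
  intro ζ hζd
  have hζr : dist ζ ζ0 ≤ r := le_of_lt (lt_of_lt_of_le hζd (min_le_right _ _))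
  have hζdd : dist ζ ζ0 < d := lt_of_lt_of_le hζd (min_le_left _ _)
  have hζball : ζ ∈ Metric.closedBall ζ0 r := Metric.mem_closedBall.mpr hζr
  have hζne : ζ ≠ 0 := hball_ne ζ hζball
  obtain ⟨θ, hθc, hθl, hθΔ⟩ := hΔ ζ hζne
  obtain ⟨ψ, hψc, hψl, hψΔ⟩ := hΔ ζ0 hζ0
  set δf : ℝ → ℝ := fun t => θ t - ψ t with hδf
  have hδc : Continuous δf := hθc.sub hψc
  have hest : ∀ t ∈ Set.Icc (0:ℝ) 1,
      ‖Complex.exp ((δf t : ℂ) * Complex.I) - 1‖ < ε := by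
    intro t ht
    have h1 : F t ζ ≠ 0 := hFne _ _ hζne
    have h2 : F t ζ0 ≠ 0 := hFne _ _ hζ0
    have e1 : Complex.exp ((θ t : ℂ) * Complex.I) = u (t, ζ) := aux_exp_eq h1 (hθl t)
    have e2 : Complex.exp ((ψ t : ℂ) * Complex.I) = u (t, ζ0) := aux_exp_eq h2 (hψl t)
    have hu2 : ‖u (t, ζ0)‖ = 1 := by
      rw [← e2, Complex.norm_exp_ofReal_mul_I]
    have hu2ne : u (t, ζ0) ≠ 0 := by
      intro h0; rw [h0] at hu2; simp at hu2
    have hexp : Complex.exp ((δf t : ℂ) * Complex.I) = u (t, ζ) / u (t, ζ0) := by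
      have hc : ((δf t : ℂ)) = (θ t : ℂ) - (ψ t : ℂ) := by push_cast [hδf]; ring
      rw [hc, sub_mul, Complex.exp_sub, e1, e2]
    have heq2 : ‖Complex.exp ((δf t : ℂ) * Complex.I) - 1‖
        = dist (u (t, ζ)) (u (t, ζ0)) := by
      rw [hexp, Complex.dist_eq]
      rw [show u (t, ζ) / u (t, ζ0) - 1 = (u (t, ζ) - u (t, ζ0)) / u (t, ζ0) by
        field_simp]
      rw [norm_div, hu2, div_one]
    rw [heq2]
    apply hd (t, ζ) ⟨ht, hζball⟩ (t, ζ0) ⟨ht, Metric.mem_closedBall_self hr0.le⟩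
    rw [Prod.dist_eq]
    simp only [dist_self]
    rw [max_eq_right dist_nonneg]
    exact hζdd
  have hcosp : ∀ t ∈ Set.Icc (0:ℝ) 1, 0 < Real.cos (δf t) := by
    intro t ht
    have h := hest t ht
    have hre : |Real.cos (δf t) - 1| ≤ ‖Complex.exp ((δf t : ℂ) * Complex.I) - 1‖ := by
      have h2 := Complex.abs_re_le_norm (Complex.exp ((δf t : ℂ) * Complex.I) - 1)
      simpa [Complex.sub_re, Complex.exp_ofReal_mul_I_re, Complex.one_re] using h2
    have h3 := hre.trans_lt h
    rw [abs_lt] at h3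
    linarith [h3.1]
  have hsinb : ∀ t ∈ Set.Icc (0:ℝ) 1, |Real.sin (δf t)| < ε := by
    intro t ht
    have h := hest t ht
    have him : |Real.sin (δf t)| ≤ ‖Complex.exp ((δf t : ℂ) * Complex.I) - 1‖ := by
      have h2 := Complex.abs_im_le_norm (Complex.exp ((δf t : ℂ) * Complex.I) - 1)
      simpa [Complex.sub_im, Complex.exp_ofReal_mul_I_im, Complex.one_im] using h2
    exact him.trans_lt h
  have hltpi : |δf 1 - δf 0| < π := by
    apply aux_ivt_avoid δf hδc.continuousOn (π / 2) π hπ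
    intro t ht k heq
    have h1 := hcosp t ht
    rw [heq, Real.cos_add, Real.cos_pi_div_two, Real.sin_pi_div_two,
      Real.sin_int_mul_pi] at h1
    simp at h1
  have key : ∀ t ∈ Set.Icc (0:ℝ) 1,
      |δf t - 2 * π * (round (δf t / (2 * π)) : ℤ)| < m := by
    intro t ht
    set n : ℤ := round (δf t / (2 * π)) with hn
    set y : ℝ := δf t - 2 * π * (n : ℝ) with hy
    have h2π : (0:ℝ) < 2 * π := by positivity
    have hyle : |y| ≤ π := by
      have h1 : |δf t / (2 * π) - (n : ℝ)| ≤ 1 / 2 := abs_sub_round _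
      have h2 : y = (2 * π) * (δf t / (2 * π) - (n : ℝ)) := by
        rw [hy, mul_sub, mul_div_cancel₀ _ h2π.ne']
      rw [h2, abs_mul, abs_of_pos h2π]
      nlinarith
    have hcosy : Real.cos y = Real.cos (δf t) := by
      rw [hy, show δf t - 2 * π * (n : ℝ) = δf t - (n : ℝ) * (2 * π) by ring]
      exact Real.cos_sub_int_mul_two_pi _ _
    have hsiny : Real.sin y = Real.sin (δf t) := by
      rw [hy, show δf t - 2 * π * (n : ℝ) = δf t - (n : ℝ) * (2 * π) by ring]
      exact Real.sin_sub_int_mul_two_pi _ _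
    have hylt2 : |y| < π / 2 := by
      by_contra hge
      push_neg at hge
      have h1 : Real.cos |y| ≤ 0 :=
        Real.cos_nonpos_of_pi_div_two_le_of_le hge (by linarith [abs_le.mp hyle])
      rw [Real.cos_abs, hcosy] at h1
      linarith [hcosp t ht]
    by_contra hge
    push_neg at hge
    have hsinabs : |Real.sin y| = Real.sin |y| := by
      rcases le_or_gt 0 y with h0 | h0
      · rw [abs_of_nonneg h0, abs_of_nonneg]
        apply Real.sin_nonneg_of_nonneg_of_le_pi h0
        linarith [abs_le.mp hyle, abs_of_nonneg h0]
      · have hs : Real.sin y ≤ 0 := by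
          apply Real.sin_nonpos_of_nonpos_of_neg_pi_le h0.le
          linarith [(abs_le.mp hyle).1, abs_of_neg h0]
        rw [abs_of_neg h0, Real.sin_neg, abs_of_nonpos hs]
    have hmono : Real.sin m ≤ Real.sin |y| := by
      apply Real.sin_le_sin_of_le_of_le_pi_div_two (by linarith) hylt2.le hge
    have hcontra := hsinb t ht
    rw [← hsiny, hsinabs] at hcontra
    rw [hε] at hcontra
    linarith
  have k0 := key 0 (by constructor <;> norm_num)
  have k1 := key 1 (by constructor <;> norm_num)
  set n0 : ℤ := round (δf 0 / (2 * π)) with hn0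
  set n1 : ℤ := round (δf 1 / (2 * π)) with hn1
  clear_value n0 n1
  rw [abs_lt] at k0 k1 hltpi
  have h2π : (0:ℝ) < 2 * π := by positivity
  have hneq : n1 = n0 := by
    have h1 : |((n1 : ℝ) - n0)| < 1 := by
      rw [abs_lt]
      constructor <;> nlinarith [k0.1, k0.2, k1.1, k1.2, hltpi.1, hltpi.2, hmlt, hπ]
    have h3 : |n1 - n0| < 1 := by exact_mod_cast (by push_cast; exact h1 : |((n1 - n0 : ℤ) : ℝ)| < 1)
    have h4 := abs_lt.mp h3
    omega
  have hfinal : |δf 1 - δf 0| < 2 * m := by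
    rw [abs_lt]
    have : (n1 : ℝ) = (n0 : ℝ) := by exact_mod_cast hneq
    constructor <;> nlinarith [k0.1, k0.2, k1.1, k1.2]
  have hdiff : Δ ζ - Δ ζ0 = (δf 1 - δf 0) / (2 * π) := by
    rw [hθΔ, hψΔ]
    simp only [hδf]
    field_simp
    ring
  rw [Real.dist_eq, hdiff, abs_div, abs_of_pos h2π, div_lt_iff₀ h2π]
  have hm2 : 2 * m ≤ π * ε0 := by
    have := min_le_left (π * ε0 / 2) (π / 4)
    rw [← hm] at this
    linarith
  nlinarith [hfinal]

lemma aux_key (F : ℝ → ℂ → ℂ)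
    (hFne : ∀ t ζ, ζ ≠ 0 → F t ζ ≠ 0)
    (hcross : ∀ t (z w : ℂ), (F t z).re * (F t w).im - (F t z).im * (F t w).re
        = z.re * w.im - z.im * w.re)
    (Δ : ℂ → ℝ)
    (hΔ : ∀ ζ : ℂ, ζ ≠ 0 → ∃ θ : ℝ → ℝ, Continuous θ ∧
      (∀ t, F t ζ = (‖F t ζ‖ : ℂ) * Complex.exp ((θ t : ℂ) * Complex.I)) ∧
      Δ ζ = (θ 1 - θ 0) / (2 * π))
    (ζ1 ζ2 : ℂ) (h1 : ζ1 ≠ 0) (h2 : ζ2 ≠ 0)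
    (hind : ζ1.re * ζ2.im - ζ1.im * ζ2.re ≠ 0) :
    |Δ ζ1 - Δ ζ2| < 1 / 2 := by
  have hπ : (0:ℝ) < π := pi_pos
  obtain ⟨θ, hθc, hθl, hθΔ⟩ := hΔ ζ1 h1
  obtain ⟨ψ, hψc, hψl, hψΔ⟩ := hΔ ζ2 h2
  have hsin : ∀ t, Real.sin (θ t - ψ t) ≠ 0 := by
    intro t h0
    apply hind
    have hF1 := hFne t ζ1 h1
    have hF2 := hFne t ζ2 h2
    obtain ⟨r1re, r1im⟩ := aux_lift_re_im (hθl t)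
    obtain ⟨r2re, r2im⟩ := aux_lift_re_im (hψl t)
    have hc := hcross t ζ1 ζ2
    rw [r1re, r1im, r2re, r2im] at hc
    rw [← hc]
    rw [Real.sin_sub] at h0
    linear_combination (-(‖F t ζ1‖ * ‖F t ζ2‖)) * h0
  have hlt : |(θ 1 - ψ 1) - (θ 0 - ψ 0)| < π := by
    apply aux_ivt_avoid (fun t => θ t - ψ t) (hθc.sub hψc).continuousOn 0 π hπ
    intro t ht k heq
    apply hsin t
    rw [heq, zero_add, Real.sin_int_mul_pi]
  have hdiff : Δ ζ1 - Δ ζ2 = ((θ 1 - ψ 1) - (θ 0 - ψ 0)) / (2 * π) := by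
    rw [hθΔ, hψΔ]
    field_simp
    ring
  rw [hdiff, abs_div, abs_of_pos (by positivity : (0:ℝ) < 2 * π), div_lt_iff₀ (by positivity : (0:ℝ) < 2 * π)]
  nlinarith [hlt]

lemma actM_ne_zero {A : Matrix (Fin 2) (Fin 2) ℝ} (hdet : A.det = 1) {ζ : ℂ}
    (hζ : ζ ≠ 0) : actM A ζ ≠ 0 := by
  intro h
  rw [Complex.ext_iff] at h
  simp only [actM, Complex.zero_re, Complex.zero_im] at h
  obtain ⟨e1, e2⟩ := h
  rw [Matrix.det_fin_two] at hdet
  apply hζ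
  apply Complex.ext
  · simp only [Complex.zero_re]
    linear_combination A 1 1 * e1 - A 0 1 * e2 - ζ.re * hdet
  · simp only [Complex.zero_im]
    linear_combination (- A 1 0) * e1 + A 0 0 * e2 - ζ.im * hdet

lemma actM_cross {A : Matrix (Fin 2) (Fin 2) ℝ} (hdet : A.det = 1) (z w : ℂ) :
    (actM A z).re * (actM A w).im - (actM A z).im * (actM A w).re
      = z.re * w.im - z.im * w.re := by
  rw [Matrix.det_fin_two] at hdet
  simp only [actM]
  linear_combination (z.re * w.im - z.im * w.re) * hdet

lemma actM_smul (A : Matrix (Fin 2) (Fin 2) ℝ) (c : ℝ) (ζ : ℂ) :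
    actM A ((c : ℂ) * ζ) = (c : ℂ) * actM A ζ := by
  apply Complex.ext <;>
    simp [actM, Complex.mul_re, Complex.mul_im, Complex.ofReal_re, Complex.ofReal_im] <;> ring

lemma actM_neg (A : Matrix (Fin 2) (Fin 2) ℝ) (ζ : ℂ) :
    actM A (-ζ) = - actM A ζ := by
  apply Complex.ext <;> simp [actM] <;> ring

lemma actM_eq (A : Matrix (Fin 2) (Fin 2) ℝ) (ζ : ℂ) :
    actM A ζ = ((A 0 0 * ζ.re + A 0 1 * ζ.im : ℝ) : ℂ)
      + ((A 1 0 * ζ.re + A 1 1 * ζ.im : ℝ) : ℂ) * Complex.I := by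
  apply Complex.ext <;> simp [actM]

/-- For a smooth path `φ : ℝ → Sp(2,ℝ)` with `φ(0) = I` and
`φ(t+1) = φ(t)φ(1)`, the rotation function `Δ_φ(ζ) = (θ(1) − θ(0))/2π`
(defined via continuous angle lifts of `t ↦ φ(t)ζ`) has image
`I_φ = Δ_φ(ℂ∖{0})` equal to a closed interval of length strictly less
than `1/2`. -/
theorem rotation_interval_length_lt_half
    (φ : ℝ → Matrix.SpecialLinearGroup (Fin 2) ℝ)
    (hsmooth : ∀ i j, ContDiff ℝ (⊤ : ℕ∞) fun t => (φ t : Matrix (Fin 2) (Fin 2) ℝ) i j)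
    (h0 : φ 0 = 1) (hper : ∀ t, φ (t + 1) = φ t * φ 1)
    (Δ : ℂ → ℝ)
    (hΔ : ∀ ζ : ℂ, ζ ≠ 0 → ∃ θ : ℝ → ℝ, Continuous θ ∧
      (∀ t, actM (φ t) ζ =
        (‖actM (φ t) ζ‖ : ℂ) * Complex.exp ((θ t : ℂ) * Complex.I)) ∧
      Δ ζ = (θ 1 - θ 0) / (2 * π)) :
    ∃ a b : ℝ, a ≤ b ∧ b - a < 1 / 2 ∧
      Δ '' {ζ : ℂ | ζ ≠ 0} = Set.Icc a b := by
  have hπ : (0:ℝ) < π := pi_pos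
  set F : ℝ → ℂ → ℂ := fun t ζ => actM (φ t) ζ with hF
  have hdet : ∀ t, ((φ t : Matrix (Fin 2) (Fin 2) ℝ)).det = 1 := fun t => (φ t).2
  have hFne : ∀ t ζ, ζ ≠ 0 → F t ζ ≠ 0 := fun t ζ hζ => actM_ne_zero (hdet t) hζ
  have hFc : Continuous fun p : ℝ × ℂ => F p.1 p.2 := by
    have : (fun p : ℝ × ℂ => F p.1 p.2) = fun p : ℝ × ℂ =>
        (((φ p.1 : Matrix (Fin 2) (Fin 2) ℝ) 0 0 * p.2.re
          + (φ p.1 : Matrix (Fin 2) (Fin 2) ℝ) 0 1 * p.2.im : ℝ) : ℂ)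
        + (((φ p.1 : Matrix (Fin 2) (Fin 2) ℝ) 1 0 * p.2.re
          + (φ p.1 : Matrix (Fin 2) (Fin 2) ℝ) 1 1 * p.2.im : ℝ) : ℂ) * Complex.I := by
      funext p
      exact actM_eq _ _
    rw [this]
    have hc : ∀ i j, Continuous fun p : ℝ × ℂ =>
        (φ p.1 : Matrix (Fin 2) (Fin 2) ℝ) i j :=
      fun i j => ((hsmooth i j).continuous).comp continuous_fst
    have hre : Continuous fun p : ℝ × ℂ => p.2.re :=
      Complex.continuous_re.comp continuous_snd
    have him : Continuous fun p : ℝ × ℂ => p.2.im :=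
      Complex.continuous_im.comp continuous_snd
    exact (Complex.continuous_ofReal.comp (((hc 0 0).mul hre).add ((hc 0 1).mul him))).add
      ((Complex.continuous_ofReal.comp (((hc 1 0).mul hre).add ((hc 1 1).mul him))).mul
        continuous_const)
  have hΔ' : ∀ ζ : ℂ, ζ ≠ 0 → ∃ θ : ℝ → ℝ, Continuous θ ∧
      (∀ t, F t ζ = (‖F t ζ‖ : ℂ) * Complex.exp ((θ t : ℂ) * Complex.I)) ∧
      Δ ζ = (θ 1 - θ 0) / (2 * π) := hΔ
  have hcrossF : ∀ t (z w : ℂ), (F t z).re * (F t w).im - (F t z).im * (F t w).re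
      = z.re * w.im - z.im * w.re := fun t z w => actM_cross (hdet t) z w
  -- scale invariance
  have hscale : ∀ (w : ℂ), w ≠ 0 → ∀ (c : ℝ), 0 < c → Δ ((c : ℂ) * w) = Δ w := by
    intro w hw c hc
    obtain ⟨θ, hθc, hθl, hθΔ⟩ := hΔ' w hw
    have hcne : ((c : ℂ)) ≠ 0 := by exact_mod_cast hc.ne'
    have hcw : (c : ℂ) * w ≠ 0 := mul_ne_zero hcne hw
    obtain ⟨ψ, hψc, hψl, hψΔ⟩ := hΔ' _ hcw
    have hexps : ∀ t, Complex.exp ((ψ t : ℂ) * Complex.I)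
        = Complex.exp ((θ t : ℂ) * Complex.I) := by
      intro t
      have hFw : F t w ≠ 0 := hFne t w hw
      have hFcw : F t ((c : ℂ) * w) ≠ 0 := hFne t _ hcw
      rw [aux_exp_eq hFcw (hψl t), aux_exp_eq hFw (hθl t)]
      have hsm : F t ((c : ℂ) * w) = (c : ℂ) * F t w := actM_smul _ c w
      rw [hsm, norm_mul]
      have habsc : ‖((c : ℂ))‖ = c := by
        rw [Complex.norm_of_nonneg hc.le]
      rw [habsc]
      push_cast
      rw [mul_div_mul_left _ _ hcne]
    have := aux_lift_unique ψ θ hψc hθc hexps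
    rw [hψΔ, hθΔ, this]
  -- negation invariance
  have hnegi : ∀ (w : ℂ), w ≠ 0 → Δ (-w) = Δ w := by
    intro w hw
    obtain ⟨θ, hθc, hθl, hθΔ⟩ := hΔ' w hw
    have hnw : -w ≠ 0 := neg_ne_zero.mpr hw
    obtain ⟨ψ, hψc, hψl, hψΔ⟩ := hΔ' _ hnw
    have hexps : ∀ t, Complex.exp ((ψ t : ℂ) * Complex.I)
        = Complex.exp (((θ t + π : ℝ) : ℂ) * Complex.I) := by
      intro t
      have hFw : F t w ≠ 0 := hFne t w hw
      have hFnw : F t (-w) ≠ 0 := hFne t _ hnw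
      rw [aux_exp_eq hFnw (hψl t)]
      have hnm : F t (-w) = - F t w := actM_neg _ w
      rw [hnm, norm_neg]
      have : (((θ t + π : ℝ)) : ℂ) * Complex.I = (θ t : ℂ) * Complex.I + (π : ℂ) * Complex.I := by
        push_cast; ring
      rw [this, Complex.exp_add, Complex.exp_pi_mul_I]
      rw [aux_exp_eq hFw (hθl t)]
      field_simp
    have := aux_lift_unique ψ (fun t => θ t + π) hψc (hθc.add continuous_const) hexps
    rw [hψΔ, hθΔ]
    rw [this]
    ring_nf
  -- the circle path
  set g : ℝ → ℝ := fun t => Δ (Complex.exp ((t : ℂ) * Complex.I)) with hg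
  have hgc : Continuous g := by
    rw [continuous_iff_continuousAt]
    intro t
    have h1 : ContinuousAt Δ (Complex.exp ((t : ℂ) * Complex.I)) :=
      aux_contAt F hFc hFne Δ hΔ' _ (Complex.exp_ne_zero _)
    have h2 : ContinuousAt (fun s : ℝ => Complex.exp ((s : ℂ) * Complex.I)) t :=
      (Complex.continuous_exp.comp (Complex.continuous_ofReal.mul continuous_const)).continuousAt
    exact ContinuousAt.comp (g := Δ)
      (f := fun s : ℝ => Complex.exp ((s : ℂ) * Complex.I)) h1 h2
  have hgper : Function.Periodic g (2 * π) := by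
    intro t
    have hcst : ((t + 2 * π : ℝ) : ℂ) * Complex.I
        = (t : ℂ) * Complex.I + 2 * (π : ℂ) * Complex.I := by push_cast; ring
    simp only [hg]
    rw [hcst, Complex.exp_add, Complex.exp_two_pi_mul_I, mul_one]
  have hrange : Set.range g = Δ '' {ζ : ℂ | ζ ≠ 0} := by
    apply Set.Subset.antisymm
    · rintro x ⟨t, rfl⟩
      exact ⟨_, Complex.exp_ne_zero _, rfl⟩
    · rintro x ⟨ζ, hζ, rfl⟩
      refine ⟨ζ.arg, ?_⟩
      show Δ (Complex.exp ((ζ.arg : ℂ) * Complex.I)) = Δ ζ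
      conv_rhs => rw [← Complex.norm_mul_exp_arg_mul_I ζ]
      exact (hscale _ (Complex.exp_ne_zero _) (‖ζ‖) (norm_pos_iff.mpr hζ)).symm
  have hIcc : g '' Set.Icc 0 (2 * π) = Set.range g := by
    have := hgper.image_Icc (by positivity) 0
    rwa [zero_add] at this
  obtain ⟨ta, hta, hmin⟩ := (isCompact_Icc : IsCompact (Set.Icc (0:ℝ) (2 * π))).exists_isMinOn
    (Set.nonempty_Icc.mpr (by positivity)) hgc.continuousOn
  obtain ⟨tb, htb, hmax⟩ := (isCompact_Icc : IsCompact (Set.Icc (0:ℝ) (2 * π))).exists_isMaxOn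
    (Set.nonempty_Icc.mpr (by positivity)) hgc.continuousOn
  have hab : g ta ≤ g tb := isMinOn_iff.mp hmin tb htb
  have himg : g '' Set.Icc 0 (2 * π) = Set.Icc (g ta) (g tb) := by
    apply Set.Subset.antisymm
    · rintro x ⟨t, ht, rfl⟩
      exact ⟨isMinOn_iff.mp hmin t ht, isMaxOn_iff.mp hmax t ht⟩
    · intro x hx
      have h1 : Set.uIcc (g ta) (g tb) ⊆ g '' Set.uIcc ta tb :=
        intermediate_value_uIcc (hgc.continuousOn)
      have h2 : Set.uIcc ta tb ⊆ Set.Icc 0 (2 * π) := Set.uIcc_subset_Icc hta htb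
      have hx' : x ∈ Set.uIcc (g ta) (g tb) := by
        rwa [Set.uIcc_of_le hab]
      obtain ⟨t, ht, rfl⟩ := h1 hx'
      exact ⟨t, h2 ht, rfl⟩
  set ζa : ℂ := Complex.exp ((ta : ℂ) * Complex.I) with hζa
  set ζb : ℂ := Complex.exp ((tb : ℂ) * Complex.I) with hζb
  have hζane : ζa ≠ 0 := Complex.exp_ne_zero _
  have hζbne : ζb ≠ 0 := Complex.exp_ne_zero _
  have hblt : g tb - g ta < 1 / 2 := by
    by_cases hdep : ζa.re * ζb.im - ζa.im * ζb.re = 0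
    · obtain ⟨c, hc⟩ := aux_dep hζbne hdep
      have hc0 : c ≠ 0 := by
        rintro rfl
        rw [Complex.ofReal_zero, zero_mul] at hc
        exact hζane hc
      have heq : g ta = g tb := by
        show Δ ζa = Δ ζb
        rcases hc0.lt_or_gt with hneg | hpos
        · have h1 : ζa = -(((-c : ℝ) : ℂ) * ζb) := by
            rw [hc]; push_cast; ring
          rw [h1]
          have hncb : ((-c : ℝ) : ℂ) * ζb ≠ 0 := by
            apply mul_ne_zero _ hζbne
            exact_mod_cast (neg_ne_zero.mpr hc0)
          rw [hnegi _ hncb]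
          exact hscale _ hζbne (-c) (by linarith)
        · rw [hc]
          exact hscale _ hζbne c hpos
      rw [heq]
      simp only [sub_self]
      norm_num
    · have h1 := aux_key F hFne hcrossF Δ hΔ' ζa ζb hζane hζbne hdep
      have h2 := abs_lt.mp h1
      have : g ta = Δ ζa := rfl
      have : g tb = Δ ζb := rfl
      show Δ ζb - Δ ζa < 1 / 2
      linarith [h2.1]
  refine ⟨g ta, g tb, hab, hblt, ?_⟩
  rw [← hrange, ← hIcc, himg]
end
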